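/- For C_{m,1} (m ≥ 2) and ℓ ≥ 2, the magnitude homology MH_{k,ℓ}(a₀,a_m) (tuples from the initial vertex a₀ to the terminal vertex a_m) vanishes except for MH_{2,m}(a₀,a_m), which is a free R-module of rank 1 generated by the class of (a₀, a₁, a_m). -/

import Mathlib

open scoped Classical

/-- A directed graph on a vertex type `V` (loops allowed, no parallel edges). -/
structure DGraph (V : Type) where
  Adj : V → V → Prop

namespace DGraph
variable {V : Type}

/-- There is a directed path of length `n` (i.e. with `n` edges) from `x` to `y`. -/
def PathLen (G : DGraph V) (x y : V) (n : ℕ) : Prop :=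
  ∃ f : ℕ → V, f 0 = x ∧ f n = y ∧ ∀ i < n, G.Adj (f i) (f (i + 1))

/-- The shortest path metric, with values in `ℕ∞ = ℕ ∪ {∞}`. -/
noncomputable def edist (G : DGraph V) (x y : V) : ℕ∞ :=
  sInf {n : ℕ∞ | ∃ m : ℕ, n = m ∧ G.PathLen x y m}

/-- The length of a tuple of vertices: the sum of consecutive distances. -/
noncomputable def tlen (G : DGraph V) {k : ℕ} (f : Fin (k + 1) → V) : ℕ∞ :=
  ∑ i : Fin k, G.edist (f i.castSucc) (f i.succ)

/-- `y` is reachable from `x` by a directed path. -/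
def Reaches (G : DGraph V) (x y : V) : Prop := Relation.ReflTransGen G.Adj x y

/-- The induced subgraph on a set of vertices. -/
def induce (G : DGraph V) (A : Set V) : DGraph A := ⟨fun a b => G.Adj a.1 b.1⟩

end DGraph

variable {V : Type}

/-- Validity of a tuple as a magnitude-chain basis element of degree `k` and length `ℓ`:
consecutive entries are distinct, at finite distance, and the total length is `ℓ`. -/
def MCValid (G : DGraph V) (k ℓ : ℕ) (f : Fin (k + 1) → V) : Prop :=
  (∀ i : Fin k, G.edist (f i.castSucc) (f i.succ) ≠ 0 ∧ G.edist (f i.castSucc) (f i.succ) ≠ ⊤) ∧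
    G.tlen f = (ℓ : ℕ∞)

/-- Basis of the magnitude chain group `MC_{k,ℓ}(G)`. -/
def MCb (G : DGraph V) (k ℓ : ℕ) : Type := {f : Fin (k + 1) → V // MCValid G k ℓ f}

/-- The magnitude chain group `MC_{k,ℓ}(G)` with coefficients in `R`. -/
abbrev MCMod (R : Type) [CommRing R] (G : DGraph V) (k ℓ : ℕ) := MCb G k ℓ →₀ R

/-- Deletion of the interior entry in position `j+1` of a `(k+2)`-tuple. -/
def delMid {k : ℕ} (f : Fin (k + 2) → V) (j : Fin k) : Fin (k + 1) → V :=
  f ∘ (Fin.succAbove j.succ.castSucc)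

/-- The magnitude-chain differential `MC_{k+1,ℓ}(G) → MC_{k,ℓ}(G)`: delete interior
entries with alternating signs, omitting any length-decreasing term. -/
noncomputable def dMC (R : Type) [CommRing R] (G : DGraph V) (k ℓ : ℕ) :
    MCMod R G (k + 1) ℓ →ₗ[R] MCMod R G k ℓ :=
  Finsupp.lsum R fun b => LinearMap.toSpanSingleton R _
    (∑ j : Fin k, (-1 : R) ^ ((j : ℕ) + 1) •
      (if h : MCValid G k ℓ (delMid b.1 j) then
        Finsupp.single (⟨delMid b.1 j, h⟩ : MCb G k ℓ) (1 : R) else 0))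

/-- The outgoing magnitude differential from degree `k` (zero in degree `0`). -/
noncomputable def dMCOut (R : Type) [CommRing R] (G : DGraph V) (ℓ : ℕ) :
    (k : ℕ) → MCMod R G k ℓ →ₗ[R] MCMod R G (k - 1) ℓ
  | 0 => 0
  | (k + 1) => dMC R G k ℓ

/-- Magnitude homology `MH_{k,ℓ}(G)` with coefficients in `R`. -/
noncomputable abbrev MH (R : Type) [CommRing R] (G : DGraph V) (k ℓ : ℕ) :=
  letI : HasQuotient (LinearMap.ker (dMCOut R G ℓ k))
      (Submodule R (LinearMap.ker (dMCOut R G ℓ k))) :=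
      Submodule.hasQuotient (R := R) (M := LinearMap.ker (dMCOut R G ℓ k))
  LinearMap.ker (dMCOut R G ℓ k) ⧸
    (LinearMap.range (dMCOut R G ℓ (k + 1))).comap (LinearMap.ker (dMCOut R G ℓ k)).subtype

/-- Embedding of the magnitude chains into the free module on all tuples of vertices. -/
noncomputable def eMC (R : Type) [CommRing R] (G : DGraph V) (k ℓ : ℕ) :
    MCMod R G k ℓ →ₗ[R] ((Fin (k + 1) → V) →₀ R) :=
  Finsupp.lmapDomain R R Subtype.val

/-- Basis of a subcomplex of the magnitude chains, cut out by a predicate `P` on tuples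
(assumed closed under the interior deletions appearing in the differential). -/
def RCb (G : DGraph V) (P : ∀ k, (Fin (k + 1) → V) → Prop) (k ℓ : ℕ) : Type :=
  {f : Fin (k + 1) → V // MCValid G k ℓ f ∧ P k f}

/-- The degree-`k`, length-`ℓ` chain group of the subcomplex cut out by `P`. -/
abbrev RMod (R : Type) [CommRing R] (G : DGraph V) (P : ∀ k, (Fin (k + 1) → V) → Prop)
    (k ℓ : ℕ) := RCb G P k ℓ →₀ R

/-- The differential of the subcomplex cut out by `P`. -/
noncomputable def dR (R : Type) [CommRing R] (G : DGraph V)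
    (P : ∀ k, (Fin (k + 1) → V) → Prop) (k ℓ : ℕ) :
    RMod R G P (k + 1) ℓ →ₗ[R] RMod R G P k ℓ :=
  Finsupp.lsum R fun b => LinearMap.toSpanSingleton R _
    (∑ j : Fin k, (-1 : R) ^ ((j : ℕ) + 1) •
      (if h : MCValid G k ℓ (delMid b.1 j) ∧ P k (delMid b.1 j) then
        Finsupp.single (⟨delMid b.1 j, h⟩ : RCb G P k ℓ) (1 : R) else 0))

/-- The outgoing differential of the subcomplex from degree `k` (zero in degree `0`). -/
noncomputable def dROut (R : Type) [CommRing R] (G : DGraph V)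
    (P : ∀ k, (Fin (k + 1) → V) → Prop) (ℓ : ℕ) :
    (k : ℕ) → RMod R G P k ℓ →ₗ[R] RMod R G P (k - 1) ℓ
  | 0 => 0
  | (k + 1) => dR R G P k ℓ

/-- The degree-`k`, length-`ℓ` homology of the subcomplex cut out by `P`. -/
noncomputable abbrev RH (R : Type) [CommRing R] (G : DGraph V)
    (P : ∀ k, (Fin (k + 1) → V) → Prop) (k ℓ : ℕ) :=
  letI : HasQuotient (LinearMap.ker (dROut R G P ℓ k))
      (Submodule R (LinearMap.ker (dROut R G P ℓ k))) :=
      Submodule.hasQuotient (R := R) (M := LinearMap.ker (dROut R G P ℓ k))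
  LinearMap.ker (dROut R G P ℓ k) ⧸
    (LinearMap.range (dROut R G P ℓ (k + 1))).comap (LinearMap.ker (dROut R G P ℓ k)).subtype

/-- Embedding of the subcomplex chains into the free module on all tuples of vertices. -/
noncomputable def eR (R : Type) [CommRing R] (G : DGraph V)
    (P : ∀ k, (Fin (k + 1) → V) → Prop) (k ℓ : ℕ) :
    RMod R G P k ℓ →ₗ[R] ((Fin (k + 1) → V) →₀ R) :=
  Finsupp.lmapDomain R R Subtype.val

/-- `A ⊆ V`, with projection `π`, is a cofibration in `G`: an induced subgraph inclusion
with no edges from outside `A` into `A`, such that every vertex `x` in the reach of `A`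
has a projection `π x ∈ A` with `d(a,x) = d(a,π x) + d(π x,x)` for all `a ∈ A`. -/
def IsCofib (G : DGraph V) (A : Set V) (π : V → V) : Prop :=
  (∀ u v : V, u ∉ A → v ∈ A → ¬ G.Adj u v) ∧
  (∀ x : V, (∃ a ∈ A, G.Reaches a x) →
    π x ∈ A ∧ ∀ a ∈ A, G.edist a x = G.edist a (π x) + G.edist (π x) x)

/-- The predicate cutting out the subcomplex `A_{*,ℓ}(a,x)` of `MC_{*,ℓ}(X)`: tuples
starting at `a`, ending at `x`, with all intermediate entries in `A`. -/
def AP (A : Set V) (a x : V) : ∀ k, (Fin (k + 1) → V) → Prop :=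
  fun k f => f 0 = a ∧ f (Fin.last k) = x ∧
    ∀ i : Fin (k + 1), i ≠ 0 → i ≠ Fin.last k → f i ∈ A

/-- The bi-directed cycle `C_{m,1}`: vertices `a₀, ..., a_m` with edges
`a_{i-1} → a_i` for `1 ≤ i ≤ m` and the extra edge `a₀ → a_m`. -/
def Cm1 (m : ℕ) : DGraph (Fin (m + 1)) :=
  ⟨fun u v => (v : ℕ) = (u : ℕ) + 1 ∨ ((u : ℕ) = 0 ∧ (v : ℕ) = m)⟩

/-- The predicate cutting out the subcomplex `MC_{*,ℓ}(a,b)` of tuples starting at `a`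
and ending at `b`. -/
def EP {V : Type} (a b : V) : ∀ k, (Fin (k + 1) → V) → Prop :=
  fun k f => f 0 = a ∧ f (Fin.last k) = b

/-!
For `ℓ ≥ 2` there are no chains from `a₀` to `a_m` in degrees `0` and `1`: the only such tuple,
`(a₀, a_m)`, has length `1`. In degree `k ≥ 2` a valid tuple has to be strictly increasing (no
vertex reaches an earlier one) and never uses the shortcut `a₀ → a_m`, so its length telescopes
to `m`. Hence everything lives in length `m`, where the chains form the simplicial chain complex
of the simplex on `a₁, …, a_{m-1}`, shifted by two. Coning off with apex `a₁` (inserting `a₁` in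
second position, with a sign, or zero if `a₁` is already there) is a contracting homotopy in
degrees `≥ 3`; in degree `2` it shows that every chain is homologous to its coefficient sum times
`(a₀, a₁, a_m)`, while the coefficient sum vanishes on boundaries.
-/

namespace RH

variable {R : Type} [CommRing R] {G : DGraph V} {P : ∀ k, (Fin (k + 1) → V) → Prop} {k ℓ : ℕ}

theorem eq_zero_of_isEmpty [IsEmpty (RCb G P k ℓ)] (c : RH R G P k ℓ) : c = 0 :=
  Subsingleton.elim _ _

theorem mk_eq_zero_iff (x : LinearMap.ker (dROut R G P ℓ k)) :
    (Submodule.Quotient.mk x : RH R G P k ℓ) = 0 ↔ ∃ y, dR R G P k ℓ y = x := by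
  rw [Submodule.Quotient.mk_eq_zero, Submodule.mem_comap]
  rfl

theorem eq_zero_of_homotopy (H : RMod R G P (k + 1) ℓ →ₗ[R] RMod R G P (k + 2) ℓ)
    (H' : RMod R G P k ℓ →ₗ[R] RMod R G P (k + 1) ℓ)
    (hH : (dR R G P (k + 1) ℓ).comp H + H'.comp (dR R G P k ℓ) = LinearMap.id)
    (c : RH R G P (k + 1) ℓ) : c = 0 := by
  obtain ⟨x, rfl⟩ := Submodule.Quotient.mk_surjective _ c
  have hx : dR R G P k ℓ x = 0 := x.2
  refine (mk_eq_zero_iff x).2 ⟨H x, ?_⟩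
  simpa [hx] using LinearMap.congr_fun hH x

end RH

namespace DGraph

variable {G : DGraph V} {x y : V} {n : ℕ}

theorem pathLen_zero_self (x : V) : G.PathLen x x 0 :=
  ⟨fun _ => x, rfl, rfl, fun _ h => absurd h (Nat.not_lt_zero _)⟩

theorem pathLen_one_of_adj (h : G.Adj x y) : G.PathLen x y 1 :=
  ⟨fun i => if i = 0 then x else y, rfl, rfl, fun i hi => by
    obtain rfl : i = 0 := Nat.lt_one_iff.1 hi
    exact h⟩

theorem edist_le_of_pathLen (h : G.PathLen x y n) : G.edist x y ≤ n :=
  sInf_le ⟨n, rfl, h⟩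

theorem edist_eq_of_pathLen (h : G.PathLen x y n) (hmin : ∀ n', G.PathLen x y n' → n ≤ n') :
    G.edist x y = n :=
  le_antisymm (edist_le_of_pathLen h) <| le_sInf fun _ ⟨n', hn', h'⟩ => hn' ▸ by
    exact_mod_cast hmin n' h'

theorem edist_eq_top (h : ∀ n, ¬G.PathLen x y n) : G.edist x y = ⊤ :=
  sInf_eq_top.2 fun _ ⟨n, _, hn⟩ => absurd hn (h n)

theorem edist_self (x : V) : G.edist x x = 0 :=
  edist_eq_of_pathLen (pathLen_zero_self x) fun n _ => n.zero_le

end DGraph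

theorem Fin.sum_succ_tsub_castSucc {k : ℕ} {g : Fin (k + 1) → ℕ} (hg : Monotone g) :
    ∑ i : Fin k, (g i.succ - g i.castSucc) = g (Fin.last k) - g 0 := by
  induction k with
  | zero => simp
  | succ k ih =>
    have h0 := hg (Fin.zero_le (Fin.last k).castSucc)
    have h1 := hg (Fin.castSucc_le_succ (Fin.last k))
    have := ih (g := g ∘ Fin.castSucc) fun a b hab => hg (Fin.castSucc_le_castSucc_iff.2 hab)
    simp only [Function.comp_apply, ← Fin.succ_castSucc, Fin.castSucc_zero] at this
    rw [Fin.sum_univ_castSucc, this, ← Fin.succ_last]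
    omega

namespace Cm1

variable {m : ℕ}

theorem eq_add_or_jump_of_pathLen (hm : 1 ≤ m) {x y : Fin (m + 1)} {n : ℕ}
    (h : (Cm1 m).PathLen x y n) : (y : ℕ) = x + n ∨ ((x : ℕ) = 0 ∧ (y : ℕ) = m ∧ n = 1) := by
  induction n generalizing x with
  | zero =>
    obtain ⟨f, rfl, rfl, -⟩ := h
    exact Or.inl rfl
  | succ n ih =>
    obtain ⟨f, rfl, rfl, hadj⟩ := h
    have hstep : (Cm1 m).Adj (f 0) (f 1) := hadj 0 n.succ_pos
    have hrest := ih (x := f 1) ⟨fun i => f (i + 1), by simp, rfl, fun i hi => hadj _ (by omega)⟩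
    have := (f (n + 1)).isLt
    rcases hstep with h1 | h1 <;> omega

theorem pathLen_of_le {x y : Fin (m + 1)} (h : x ≤ y) : (Cm1 m).PathLen x y (y - x) := by
  have := Fin.le_def.1 h
  have := y.isLt
  exact ⟨fun i => ⟨min (x + i) m, by omega⟩, Fin.ext (by simp; omega), Fin.ext (by simp; omega),
    fun i hi => Or.inl (by simp; omega)⟩

theorem edist_of_lt {x y : Fin (m + 1)} (h : x < y) (hjump : ¬((x : ℕ) = 0 ∧ (y : ℕ) = m)) :
    (Cm1 m).edist x y = ((y - x : ℕ) : ℕ∞) :=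
  DGraph.edist_eq_of_pathLen (pathLen_of_le h.le) fun n hn => by
    have := Fin.lt_def.1 h
    have := y.isLt
    rcases eq_add_or_jump_of_pathLen (by omega) hn with h' | h' <;> omega

theorem edist_eq_top_of_lt {x y : Fin (m + 1)} (h : y < x) : (Cm1 m).edist x y = ⊤ :=
  DGraph.edist_eq_top fun n hn => by
    have := Fin.lt_def.1 h
    have := x.isLt
    rcases eq_add_or_jump_of_pathLen (by omega) hn with h' | h' <;> omega

theorem lt_of_edist_ne_zero_of_ne_top {x y : Fin (m + 1)} (h0 : (Cm1 m).edist x y ≠ 0)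
    (htop : (Cm1 m).edist x y ≠ ⊤) : x < y := by
  rcases lt_trichotomy x y with h | rfl | h
  · exact h
  · exact absurd (DGraph.edist_self x) h0
  · exact absurd (edist_eq_top_of_lt h) htop

end Cm1

theorem Fin.removeNth_succ_cons {n : ℕ} (x : V) (p : Fin (n + 1) → V) (i : Fin (n + 1)) :
    Fin.removeNth i.succ (Fin.cons x p : Fin (n + 2) → V) = Fin.cons x (Fin.removeNth i p) :=
  Fin.cons_comp_succ_succAbove x p i

section TupleSurgery

variable {k : ℕ}

theorem delMid_cons (a : V) (g : Fin (k + 1) → V) (j : Fin k) :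
    delMid (Fin.cons a g) j = Fin.cons a (Fin.removeNth j.castSucc g) := by
  rw [delMid, ← Fin.succ_castSucc, Fin.cons_comp_succ_succAbove]

theorem delMid_eq_cons (f : Fin (k + 2) → V) (j : Fin k) :
    delMid f j = Fin.cons (f 0) (Fin.removeNth j.castSucc (Fin.tail f)) := by
  rw [← delMid_cons, Fin.cons_self_tail]

def insertSecond (v : V) (f : Fin (k + 1) → V) : Fin (k + 2) → V :=
  Fin.cons (f 0) (Fin.cons v (Fin.tail f))

theorem delMid_insertSecond_zero (v : V) (f : Fin (k + 2) → V) :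
    delMid (insertSecond v f) 0 = f := by
  rw [insertSecond, delMid_cons, Fin.castSucc_zero, Fin.removeNth_zero, Fin.tail_cons,
    Fin.cons_self_tail]

theorem delMid_insertSecond_succ (v : V) (f : Fin (k + 2) → V) (j : Fin k) :
    delMid (insertSecond v f) j.succ = insertSecond v (delMid f j) := by
  rw [insertSecond, delMid_cons, ← Fin.succ_castSucc, Fin.removeNth_succ_cons, delMid_eq_cons f,
    insertSecond, Fin.cons_zero, Fin.tail_cons]

theorem insertSecond_delMid_zero {v : V} {f : Fin (k + 3) → V} (h : f 1 = v) :
    insertSecond v (delMid f 0) = f := by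
  subst h
  ext i
  exact Fin.cases rfl (Fin.cases rfl fun _ => rfl) i

theorem delMid_succ_apply_one (f : Fin (k + 3) → V) (j : Fin k) :
    delMid f j.succ 1 = f 1 := by
  rw [delMid_eq_cons, ← Fin.succ_zero_eq_one, Fin.cons_succ, ← Fin.succ_castSucc,
    Fin.removeNth_apply, Fin.succ_succAbove_zero]
  rfl

end TupleSurgery

namespace Cm1

variable {m k : ℕ}

def IsAscending (f : Fin (k + 1) → Fin (m + 1)) : Prop :=
  f 0 = 0 ∧ f (Fin.last k) = Fin.last m ∧ StrictMono f

theorem IsAscending.edist_eq {f : Fin (k + 1) → Fin (m + 1)} (hf : IsAscending f)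
    (hk : 2 ≤ k) (i : Fin k) :
    (Cm1 m).edist (f i.castSucc) (f i.succ) = ((f i.succ - f i.castSucc : ℕ) : ℕ∞) := by
  refine edist_of_lt (hf.2.2 i.castSucc_lt_succ) fun ⟨h0, hlast⟩ => ?_
  have h0 : i.castSucc = 0 := hf.2.2.injective (by rw [hf.1]; exact Fin.ext h0)
  have hlast : i.succ = Fin.last k := hf.2.2.injective (by rw [hf.2.1]; exact Fin.ext hlast)
  have := congrArg Fin.val h0
  have := congrArg Fin.val hlast
  simp only [Fin.val_castSucc, Fin.val_zero, Fin.val_succ, Fin.val_last] at *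
  omega

theorem IsAscending.tlen_eq {f : Fin (k + 1) → Fin (m + 1)} (hf : IsAscending f)
    (hk : 2 ≤ k) : (Cm1 m).tlen f = m := by
  rw [DGraph.tlen, Finset.sum_congr rfl fun i _ => hf.edist_eq hk i, ← Nat.cast_sum,
    Fin.sum_succ_tsub_castSucc fun _ _ h => Fin.le_def.1 (hf.2.2.monotone h), hf.1, hf.2.1]
  simp

theorem mcValid_and_ep_iff {ℓ : ℕ} (hk : 2 ≤ k) {f : Fin (k + 1) → Fin (m + 1)} :
    MCValid (Cm1 m) k ℓ f ∧ EP (0 : Fin (m + 1)) (Fin.last m) k f ↔ IsAscending f ∧ ℓ = m := by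
  constructor
  · rintro ⟨⟨hstep, hlen⟩, h0, hlast⟩
    have hf : IsAscending f := ⟨h0, hlast, Fin.strictMono_iff_lt_succ.2 fun i =>
      lt_of_edist_ne_zero_of_ne_top (hstep i).1 (hstep i).2⟩
    refine ⟨hf, ?_⟩
    exact_mod_cast hlen.symm.trans (hf.tlen_eq hk)
  · rintro ⟨hf, rfl⟩
    refine ⟨⟨fun i => ?_, hf.tlen_eq hk⟩, hf.1, hf.2.1⟩
    have := Fin.lt_def.1 (hf.2.2 i.castSucc_lt_succ)
    rw [hf.edist_eq hk i]
    exact ⟨Nat.cast_ne_zero.2 (by omega), ENat.natCast_ne_top _⟩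

theorem two_le_and_eq_of_basis {ℓ : ℕ} (hℓ : 2 ≤ ℓ)
    (b : RCb (Cm1 m) (EP (0 : Fin (m + 1)) (Fin.last m)) k ℓ) : 2 ≤ k ∧ ℓ = m := by
  obtain ⟨f, ⟨hstep, hlen⟩, h0, hlast⟩ := b
  match k with
  | 0 =>
    simp only [DGraph.tlen, Finset.univ_eq_empty, Finset.sum_empty] at hlen
    exact absurd (by exact_mod_cast hlen) (by omega : 0 ≠ ℓ)
  | 1 =>
    have hjump : (Cm1 m).Adj (f 0) (f 1) := Or.inr ⟨congrArg Fin.val h0, congrArg Fin.val hlast⟩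
    rw [DGraph.tlen, Fin.sum_univ_one] at hlen
    have : (ℓ : ℕ∞) ≤ 1 := hlen ▸ DGraph.edist_le_of_pathLen (DGraph.pathLen_one_of_adj hjump)
    exact absurd (by exact_mod_cast this) (by omega : ¬ℓ ≤ 1)
  | k + 2 => exact ⟨by omega, ((mcValid_and_ep_iff (by omega)).1 ⟨⟨hstep, hlen⟩, h0, hlast⟩).2⟩

theorem IsAscending.delMid {f : Fin (k + 3) → Fin (m + 1)} (hf : IsAscending f) (j : Fin (k + 1)) :
    IsAscending (delMid f j) := by
  refine ⟨?_, ?_, hf.2.2.comp (Fin.strictMono_succAbove _)⟩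
  · rw [delMid_eq_cons, Fin.cons_zero, hf.1]
  · rw [← hf.2.1, _root_.delMid, Function.comp_apply,
      Fin.succAbove_of_le_castSucc _ _ (Fin.castSucc_le_castSucc_iff.2 (Fin.le_last _)),
      Fin.succ_last]

-- An ascending tuple with two entries forces `m ≥ 1`, so the numeral `1 : Fin (m + 1)` does not
-- wrap around to `0`.
theorem IsAscending.val_one {f : Fin (k + 2) → Fin (m + 1)} (hf : IsAscending f) :
    ((1 : Fin (m + 1)) : ℕ) = 1 := by
  have h01 := Fin.lt_def.1 (hf.2.2 (Fin.zero_lt_one : (0 : Fin (k + 2)) < 1))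
  have := (f 1).isLt
  rw [hf.1, Fin.val_zero] at h01
  rw [Fin.val_one', Nat.mod_eq_of_lt (by omega)]

theorem IsAscending.one_lt_apply_succ {f : Fin (k + 2) → Fin (m + 1)} (hf : IsAscending f)
    (h1 : f 1 ≠ 1) (i : Fin (k + 1)) : (1 : Fin (m + 1)) < f i.succ := by
  have h01 := Fin.lt_def.1 (hf.2.2 (Fin.zero_lt_one : (0 : Fin (k + 2)) < 1))
  have h1i := Fin.le_def.1 (hf.2.2.monotone (Fin.succ_le_succ_iff.2 (Fin.zero_le i)))
  have hv1 := hf.val_one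
  rw [hf.1, Fin.val_zero] at h01
  rw [Fin.succ_zero_eq_one] at h1i
  rw [Ne, Fin.ext_iff, hv1] at h1
  rw [Fin.lt_def, hv1]
  omega

theorem IsAscending.insertSecond {f : Fin (k + 2) → Fin (m + 1)} (hf : IsAscending f)
    (h1 : f 1 ≠ 1) : IsAscending (insertSecond 1 f) := by
  have h01 : (0 : Fin (m + 1)) < 1 := by rw [Fin.lt_def, hf.val_one]; exact Nat.zero_lt_one
  refine ⟨hf.1, ?_, ?_⟩
  · rw [← hf.2.1, _root_.insertSecond, ← Fin.succ_last, Fin.cons_succ, ← Fin.succ_last,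
      Fin.cons_succ]
    rfl
  · refine Fin.strictMono_cons.2 ⟨Fin.cases ?_ fun i => ?_,
      Fin.strictMono_cons.2 ⟨hf.one_lt_apply_succ h1, hf.2.2.comp Fin.strictMono_succ⟩⟩
    · rwa [Fin.cons_zero, hf.1]
    · rw [Fin.cons_succ, hf.1]
      exact h01.trans (hf.one_lt_apply_succ h1 i)

theorem IsAscending.apply_two_ne_one {f : Fin (k + 3) → Fin (m + 1)} (hf : IsAscending f) :
    f 2 ≠ 1 := by
  have h01 := Fin.lt_def.1 (hf.2.2 (Fin.zero_lt_one : (0 : Fin (k + 3)) < 1))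
  have h12 := Fin.lt_def.1 (hf.2.2 (by simp [Fin.lt_def, Nat.mod_eq_of_lt] : (1 : Fin (k + 3)) < 2))
  rw [hf.1, Fin.val_zero] at h01
  rw [Ne, Fin.ext_iff, hf.val_one]
  omega

theorem delMid_apply_one_ne {f : Fin (k + 3) → Fin (m + 1)} (hf : IsAscending f)
    (h1 : f 1 ≠ 1) (j : Fin (k + 1)) : delMid f j 1 ≠ 1 :=
  Fin.cases hf.apply_two_ne_one (fun j => (delMid_succ_apply_one f j).trans_ne h1) j

end Cm1

namespace Cm1

local notation "𝔹[" m ", " k "]" => RCb (Cm1 m) (EP (0 : Fin (m + 1)) (Fin.last m)) k m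
local notation "ℭ[" R ", " m ", " k "]" => RMod R (Cm1 m) (EP (0 : Fin (m + 1)) (Fin.last m)) k m
local notation "∂[" R ", " m ", " k "]" => dR R (Cm1 m) (EP (0 : Fin (m + 1)) (Fin.last m)) k m

variable {R : Type} [CommRing R] {m : ℕ}

theorem isAscending_basis {k : ℕ} (b : 𝔹[m, k]) (hk : 2 ≤ k := by omega) : IsAscending b.1 :=
  ((mcValid_and_ep_iff hk).1 b.2).1

abbrev IsAscending.toBasis {k : ℕ} {f : Fin (k + 1) → Fin (m + 1)} (hf : IsAscending f)
    (hk : 2 ≤ k := by omega) : 𝔹[m, k] :=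
  ⟨f, (mcValid_and_ep_iff hk).2 ⟨hf, rfl⟩⟩

variable (R m) in
noncomputable def cone (n : ℕ) : ℭ[R, m, n + 2] →ₗ[R] ℭ[R, m, n + 3] :=
  Finsupp.linearCombination R fun b =>
    if h : b.1 1 = 1 then 0 else -Finsupp.single ((isAscending_basis b).insertSecond h).toBasis 1

theorem cone_single_of_apply_one_eq {n : ℕ} (b : 𝔹[m, n + 2]) (h1 : b.1 1 = 1) :
    cone R m n (Finsupp.single b 1) = 0 := by
  rw [cone, Finsupp.linearCombination_single, one_smul, dif_pos h1]

theorem cone_single_of_apply_one_ne {n : ℕ} (b : 𝔹[m, n + 2]) (h1 : b.1 1 ≠ 1) :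
    cone R m n (Finsupp.single b 1) =
      -Finsupp.single ((isAscending_basis b).insertSecond h1).toBasis 1 := by
  rw [cone, Finsupp.linearCombination_single, one_smul, dif_neg h1]

theorem dR_single {n : ℕ} (b : 𝔹[m, n + 3]) :
    ∂[R, m, n + 2] (Finsupp.single b 1) =
      ∑ j : Fin (n + 2), (-1 : R) ^ ((j : ℕ) + 1) •
        Finsupp.single ((isAscending_basis b).delMid j).toBasis 1 := by
  rw [dR, Finsupp.lsum_single, LinearMap.toSpanSingleton_apply, one_smul]
  refine Finset.sum_congr rfl fun j _ => ?_
  rw [dif_pos ((mcValid_and_ep_iff (by omega)).2 ⟨(isAscending_basis b).delMid j, rfl⟩)]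
  rfl

theorem cone_dR_single_of_apply_one_eq {n : ℕ} (b : 𝔹[m, n + 3]) (h1 : b.1 1 = 1) :
    cone R m n (∂[R, m, n + 2] (Finsupp.single b 1)) = Finsupp.single b 1 := by
  have hb := isAscending_basis b
  have hinsert : ((hb.delMid 0).insertSecond hb.apply_two_ne_one).toBasis = b :=
    Subtype.ext (insertSecond_delMid_zero h1)
  have hvanish (j : Fin (n + 1)) :
      cone R m n (Finsupp.single (hb.delMid j.succ).toBasis 1) = 0 :=
    cone_single_of_apply_one_eq _ ((delMid_succ_apply_one b.1 j).trans h1)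
  rw [dR_single, map_sum, Fin.sum_univ_succ, map_smul,
    cone_single_of_apply_one_ne _ hb.apply_two_ne_one, hinsert]
  simp only [map_smul, hvanish, smul_zero, Finset.sum_const_zero, add_zero, Fin.val_zero,
    zero_add, pow_one, neg_one_smul, neg_neg]

theorem dR_cone_add_cone_dR_single_of_apply_one_ne {n : ℕ} (b : 𝔹[m, n + 3]) (h1 : b.1 1 ≠ 1) :
    ∂[R, m, n + 3] (cone R m (n + 1) (Finsupp.single b 1)) +
      cone R m n (∂[R, m, n + 2] (Finsupp.single b 1)) = Finsupp.single b 1 := by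
  have hb := isAscending_basis b
  have hc := isAscending_basis (hb.insertSecond h1).toBasis
  have hdel_zero : (hc.delMid 0).toBasis = b := Subtype.ext (delMid_insertSecond_zero 1 b.1)
  have hdel_succ (j : Fin (n + 2)) : (hc.delMid j.succ).toBasis =
      ((hb.delMid j).insertSecond (delMid_apply_one_ne hb h1 j)).toBasis :=
    Subtype.ext (delMid_insertSecond_succ 1 b.1 j)
  have hcone (j : Fin (n + 2)) : cone R m n (Finsupp.single (hb.delMid j).toBasis 1) =
      -Finsupp.single ((hb.delMid j).insertSecond (delMid_apply_one_ne hb h1 j)).toBasis 1 :=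
    cone_single_of_apply_one_ne _ (delMid_apply_one_ne hb h1 j)
  rw [cone_single_of_apply_one_ne b h1, map_neg, dR_single, Fin.sum_univ_succ, hdel_zero, dR_single,
    map_sum]
  simp only [hdel_succ, LinearMap.map_smul_of_tower, hcone]
  simp only [Fin.val_succ, Fin.val_zero, zero_add, pow_one, pow_succ _ (_ + 1), smul_neg,
    mul_neg_one, neg_smul, neg_add, neg_neg, one_smul, Finset.sum_neg_distrib, add_neg_cancel_right]

theorem dR_comp_cone_add_cone_comp_dR (n : ℕ) :
    (∂[R, m, n + 3]).comp (cone R m (n + 1)) + (cone R m n).comp ∂[R, m, n + 2] =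
      LinearMap.id := by
  refine Finsupp.lhom_ext' fun b => LinearMap.ext_ring ?_
  simp only [LinearMap.add_apply, LinearMap.comp_apply, Finsupp.lsingle_apply, LinearMap.id_apply]
  by_cases h1 : b.1 1 = 1
  · rw [cone_single_of_apply_one_eq b h1, map_zero, zero_add, cone_dR_single_of_apply_one_eq b h1]
  · exact dR_cone_add_cone_dR_single_of_apply_one_ne b h1

theorem isAscending_generator (hm : 2 ≤ m) :
    IsAscending (![0, 1, Fin.last m] : Fin 3 → Fin (m + 1)) := by
  refine ⟨rfl, rfl, Fin.strictMono_iff_lt_succ.2 fun i => ?_⟩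
  fin_cases i <;> simp [Fin.lt_def, Nat.mod_eq_of_lt (by omega : 1 < m + 1), (by omega : 1 < m)]

abbrev generator (hm : 2 ≤ m) : 𝔹[m, 2] := (isAscending_generator hm).toBasis

theorem dR_cone_zero_single (hm : 2 ≤ m) (b : 𝔹[m, 2]) :
    ∂[R, m, 2] (cone R m 0 (Finsupp.single b 1)) =
      Finsupp.single b 1 - Finsupp.single (generator hm) 1 := by
  have hb := isAscending_basis b
  by_cases h1 : b.1 1 = 1
  · have : b = generator hm := Subtype.ext <| funext fun i => by
      fin_cases i
      exacts [hb.1, h1, hb.2.1]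
    rw [cone_single_of_apply_one_eq b h1, map_zero, this, sub_self]
  · have hdel_zero : ((isAscending_basis (hb.insertSecond h1).toBasis).delMid 0).toBasis = b :=
      Subtype.ext (delMid_insertSecond_zero 1 b.1)
    have hdel_one : ((isAscending_basis (hb.insertSecond h1).toBasis).delMid 1).toBasis =
        generator hm := Subtype.ext <| funext fun i => by
      fin_cases i
      exacts [hb.1, rfl, hb.2.1]
    rw [cone_single_of_apply_one_ne b h1, map_neg, dR_single, Fin.sum_univ_two, hdel_zero,
      hdel_one]
    simp only [Fin.val_zero, Fin.val_one, zero_add, pow_one, one_add_one_eq_two, neg_one_sq,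
      neg_one_smul, one_smul, neg_add_eq_sub, neg_sub]

theorem dR_cone_zero (hm : 2 ≤ m) (x : ℭ[R, m, 2]) :
    ∂[R, m, 2] (cone R m 0 x) =
      x - Finsupp.linearCombination R (fun _ => (1 : R)) x • Finsupp.single (generator hm) 1 := by
  have : (∂[R, m, 2]).comp (cone R m 0) = LinearMap.id -
      (LinearMap.toSpanSingleton R _ (Finsupp.single (generator hm) 1)).comp
        (Finsupp.linearCombination R fun _ => 1) :=
    Finsupp.lhom_ext' fun b => LinearMap.ext_ring (by simp [dR_cone_zero_single hm b])
  exact LinearMap.congr_fun this x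

theorem linearCombination_one_dR (w : ℭ[R, m, 3]) :
    Finsupp.linearCombination R (fun _ => (1 : R)) (∂[R, m, 2] w) = 0 := by
  have : (Finsupp.linearCombination R fun _ => (1 : R)).comp ∂[R, m, 2] = 0 :=
    Finsupp.lhom_ext' fun b => LinearMap.ext_ring (by simp [dR_single])
  exact LinearMap.congr_fun this w

end Cm1

/-- for `C_{m,1}` (`m ≥ 2`) and `ℓ ≥ 2`, the magnitude homology
`MH_{k,ℓ}(a₀,a_m)` vanishes except for `MH_{2,m}(a₀,a_m)`, which is free of rank `1`,
generated by the class of `(a₀, a₁, a_m)`. -/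
theorem Cm1_endpoint_homology (R : Type) [CommRing R] (m : ℕ) (hm : 2 ≤ m) :
    -- vanishing away from `(k,ℓ) = (2,m)`:
    (∀ k ℓ : ℕ, 2 ≤ ℓ → ¬(k = 2 ∧ ℓ = m) →
      ∀ c : RH R (Cm1 m) (EP (0 : Fin (m + 1)) (Fin.last m)) k ℓ, c = 0) ∧
    -- `MH_{2,m}(a₀,a_m)` is freely generated by the class of `(a₀, a₁, a_m)`:
    (∃ (b : RCb (Cm1 m) (EP (0 : Fin (m + 1)) (Fin.last m)) 2 m)
       (z : LinearMap.ker (dROut R (Cm1 m) (EP (0 : Fin (m + 1)) (Fin.last m)) m 2)),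
      b.1 = ![0, 1, Fin.last m] ∧
      (z : RMod R (Cm1 m) (EP (0 : Fin (m + 1)) (Fin.last m)) 2 m) = Finsupp.single b 1 ∧
      (∀ y : RH R (Cm1 m) (EP (0 : Fin (m + 1)) (Fin.last m)) 2 m,
        ∃ r : R, y = r • (Submodule.Quotient.mk z :
          RH R (Cm1 m) (EP (0 : Fin (m + 1)) (Fin.last m)) 2 m)) ∧
      (∀ r : R, r • (Submodule.Quotient.mk z :
          RH R (Cm1 m) (EP (0 : Fin (m + 1)) (Fin.last m)) 2 m) = 0 → r = 0)) := by
  refine ⟨fun k ℓ hℓ hne c => ?_, ?_⟩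
  · cases isEmpty_or_nonempty (RCb (Cm1 m) (EP (0 : Fin (m + 1)) (Fin.last m)) k ℓ) with
    | inl => exact RH.eq_zero_of_isEmpty c
    | inr hb =>
      obtain ⟨hk, rfl⟩ := Cm1.two_le_and_eq_of_basis hℓ hb.some
      obtain ⟨n, rfl⟩ : ∃ n, k = n + 3 := ⟨k - 3, by omega⟩
      exact RH.eq_zero_of_homotopy _ _ (Cm1.dR_comp_cone_add_cone_comp_dR n) c
  · have : IsEmpty (RCb (Cm1 m) (EP (0 : Fin (m + 1)) (Fin.last m)) 1 m) :=
      ⟨fun b => absurd (Cm1.two_le_and_eq_of_basis hm b).1 (by omega)⟩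
    let z : LinearMap.ker (dROut R (Cm1 m) (EP (0 : Fin (m + 1)) (Fin.last m)) m 2) :=
      ⟨Finsupp.single (Cm1.generator hm) 1, Subsingleton.elim _ _⟩
    refine ⟨Cm1.generator hm, z, rfl, rfl, fun y => ?_, fun r hr => ?_⟩
    · obtain ⟨x, rfl⟩ := Submodule.Quotient.mk_surjective _ y
      refine ⟨Finsupp.linearCombination R (fun _ => (1 : R)) x.1, ?_⟩
      rw [← Submodule.Quotient.mk_smul, ← sub_eq_zero, ← Submodule.Quotient.mk_sub,
        RH.mk_eq_zero_iff]
      refine ⟨Cm1.cone R m 0 x.1, ?_⟩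
      rw [Cm1.dR_cone_zero hm x.1]
      rfl
    · obtain ⟨w, hw⟩ := (RH.mk_eq_zero_iff (r • z)).1 ((Submodule.Quotient.mk_smul _ r z).trans hr)
      simpa [z] using (congrArg _ hw).symm.trans (Cm1.linearCombination_one_dR w)
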